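/- arXiv:2604.19177 — 3 statements merged into one kernel-verified Lean document; each statement's English description precedes it below -/
import Mathlib

section
/- Let (Ω, ℱ, μ) be a standard Borel probability space, let X, Y : Ω → (0,1] be random variables, Z : Ω → ℝ^d measurable, and let k1, k2 ≥ 1 be integers. Then X ⊥_{k1,k2} Y | Z holds if and only if for every I ∈ 𝓘_{k1−1} and every J ∈ 𝓙_{k2−1}, μ-almost everywhere: μ[1_{X∈I^left}·1_{Y∈J^left} | σ(Z)] · μ[1_{X∈I^right}·1_{Y∈J^right} | σ(Z)] = μ[1_{X∈I^left}·1_{Y∈J^right} | σ(Z)] · μ[1_{X∈I^right}·1_{Y∈J^left} | σ(Z)]. (This cross-product identity is the almost-sure vanishing of the conditional log odds ratio θ(I, J, Z) of the window I×J.) -/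
/-!
If the four children of every window are conditionally independent, both sides of the
cross-product identity equal the product of the four marginal conditional probabilities.

Conversely, descend the two dyadic trees level by level; at the root there is nothing to prove,
since `(0,1]` is all of `Ω`. Suppose the parent rectangle `I × J` and the rectangles
`I^left × J`, `I × J^left` already factor. Writing `a, b, c, d` for the conditional probabilities
of the cells `I^left × J^left`, `I^left × J^right`, `I^right × J^left`, `I^right × J^right` and
`P, Q, P₁, Q₁` for those of `I, J, I^left, J^left`, we have `a + b + c + d = P Q`,
`a + b = P₁ Q`, `a + c = P Q₁` and `a d = b c`, so `a P Q = a (a + b + c + d) = (a + b) (a + c) = P₁ Q₁ P Q`, whence `a = P₁ Q₁`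
(if `P Q = 0` both sides vanish). The other three cells follow by subtraction from the parents.
-/

open MeasureTheory

/-- The level-`l` dyadic interval `((j)·2^{−l}, (j+1)·2^{−l}]` of `(0,1]` (for `j < 2^l`). -/
def dyad (l j : ℕ) : Set ℝ := Set.Ioc ((j : ℝ) / 2 ^ l) (((j : ℝ) + 1) / 2 ^ l)

/-- `(k1,k2)`-conditional independence of `X` and `Y` given `Z`: for every dyadic interval
`I` in the tree `𝓘_{k1}` (any level `l1 ≤ k1`) and `J` in `𝓙_{k2}`,
`μ[1_{X∈I}·1_{Y∈J} | σ(Z)] = μ[1_{X∈I} | σ(Z)]·μ[1_{Y∈J} | σ(Z)]` a.e. -/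
def kCondIndep {Ω : Type*} [MeasurableSpace Ω] (μ : Measure Ω)
    {E : Type*} [MeasurableSpace E]
    (X Y : Ω → ℝ) (Z : Ω → E) (k1 k2 : ℕ) : Prop :=
  ∀ l1 ≤ k1, ∀ l2 ≤ k2, ∀ j1 < 2 ^ l1, ∀ j2 < 2 ^ l2,
    μ[fun ω => (dyad l1 j1).indicator (fun _ => (1 : ℝ)) (X ω) *
        (dyad l2 j2).indicator (fun _ => (1 : ℝ)) (Y ω) |
      MeasurableSpace.comap Z inferInstance]
    =ᵐ[μ]
    (μ[fun ω => (dyad l1 j1).indicator (fun _ => (1 : ℝ)) (X ω) |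
        MeasurableSpace.comap Z inferInstance]) *
      (μ[fun ω => (dyad l2 j2).indicator (fun _ => (1 : ℝ)) (Y ω) |
        MeasurableSpace.comap Z inferInstance])

open Set

section CondIndepPair

variable {Ω : Type*} {m m0 : MeasurableSpace Ω} {μ : Measure Ω}

variable (m μ) in
def CondIndepPair (A B : Set Ω) : Prop :=
  μ[(A ∩ B).indicator (1 : Ω → ℝ)|m] =ᵐ[μ] μ[A.indicator 1|m] * μ[B.indicator 1|m]

variable (m μ) in
def CrossRatioEq (A₁ A₂ B₁ B₂ : Set Ω) : Prop :=
  μ[(A₁ ∩ B₁).indicator (1 : Ω → ℝ)|m] * μ[(A₂ ∩ B₂).indicator 1|m]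
    =ᵐ[μ] μ[(A₁ ∩ B₂).indicator 1|m] * μ[(A₂ ∩ B₁).indicator 1|m]

theorem CondIndepPair.symm {A B : Set Ω} (h : CondIndepPair m μ A B) : CondIndepPair m μ B A := by
  rw [CondIndepPair, inter_comm, mul_comm]
  exact h

theorem condIndepPair_univ_left [IsFiniteMeasure μ] (hm : m ≤ m0) (B : Set Ω) :
    CondIndepPair m μ univ B := by
  have h1 : μ[(1 : Ω → ℝ)|m] = 1 := condExp_const hm (1 : ℝ)
  rw [CondIndepPair, univ_inter, indicator_univ, h1, one_mul]

theorem condIndepPair_univ_right [IsFiniteMeasure μ] (hm : m ≤ m0) (A : Set Ω) :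
    CondIndepPair m μ A univ :=
  (condIndepPair_univ_left hm A).symm

theorem CrossRatioEq.of_condIndepPair {A₁ A₂ B₁ B₂ : Set Ω}
    (h₁₁ : CondIndepPair m μ A₁ B₁) (h₁₂ : CondIndepPair m μ A₁ B₂)
    (h₂₁ : CondIndepPair m μ A₂ B₁) (h₂₂ : CondIndepPair m μ A₂ B₂) :
    CrossRatioEq m μ A₁ A₂ B₁ B₂ := by
  filter_upwards [h₁₁, h₁₂, h₂₁, h₂₂] with ω e₁₁ e₁₂ e₂₁ e₂₂
  simp only [Pi.mul_apply] at *
  rw [e₁₁, e₁₂, e₂₁, e₂₂]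
  ring

theorem condExp_indicator_union_ae_eq [IsFiniteMeasure μ] {A B : Set Ω}
    (hA : MeasurableSet A) (hB : MeasurableSet B) (hAB : Disjoint A B) :
    μ[(A ∪ B).indicator (1 : Ω → ℝ)|m] =ᵐ[μ] μ[A.indicator 1|m] + μ[B.indicator 1|m] := by
  rw [indicator_union_of_disjoint hAB]
  exact condExp_add ((integrable_const 1).indicator hA) ((integrable_const 1).indicator hB) m

theorem condExp_indicator_nonneg (A : Set Ω) : 0 ≤ᵐ[μ] μ[A.indicator (1 : Ω → ℝ)|m] :=
  condExp_nonneg (.of_forall (indicator_nonneg fun _ _ => zero_le_one))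

theorem condExp_indicator_mono [IsFiniteMeasure μ] {A B : Set Ω}
    (hA : MeasurableSet A) (hB : MeasurableSet B) (hAB : A ⊆ B) :
    μ[A.indicator (1 : Ω → ℝ)|m] ≤ᵐ[μ] μ[B.indicator 1|m] :=
  condExp_mono ((integrable_const 1).indicator hA) ((integrable_const 1).indicator hB)
    (.of_forall (indicator_le_indicator_of_subset hAB fun _ => zero_le_one))

theorem condExp_indicator_inter_union_ae_eq [IsFiniteMeasure μ] {A B₁ B₂ : Set Ω}
    (hA : MeasurableSet A) (hB₁ : MeasurableSet B₁) (hB₂ : MeasurableSet B₂)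
    (hB : Disjoint B₁ B₂) :
    μ[(A ∩ (B₁ ∪ B₂)).indicator (1 : Ω → ℝ)|m]
      =ᵐ[μ] μ[(A ∩ B₁).indicator 1|m] + μ[(A ∩ B₂).indicator 1|m] := by
  rw [inter_union_distrib_left]
  exact condExp_indicator_union_ae_eq (hA.inter hB₁) (hA.inter hB₂)
    (hB.mono inter_subset_right inter_subset_right)

theorem condExp_indicator_union_inter_ae_eq [IsFiniteMeasure μ] {A₁ A₂ B : Set Ω}
    (hA₁ : MeasurableSet A₁) (hA₂ : MeasurableSet A₂) (hB : MeasurableSet B)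
    (hA : Disjoint A₁ A₂) :
    μ[((A₁ ∪ A₂) ∩ B).indicator (1 : Ω → ℝ)|m]
      =ᵐ[μ] μ[(A₁ ∩ B).indicator 1|m] + μ[(A₂ ∩ B).indicator 1|m] := by
  rw [union_inter_distrib_right]
  exact condExp_indicator_union_ae_eq (hA₁.inter hB) (hA₂.inter hB)
    (hA.mono inter_subset_left inter_subset_left)

theorem CondIndepPair.of_union_left [IsFiniteMeasure μ] {A A₁ A₂ B : Set Ω}
    (hA₁ : MeasurableSet A₁) (hA₂ : MeasurableSet A₂) (hB : MeasurableSet B)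
    (hd : Disjoint A₁ A₂) (hA : A = A₁ ∪ A₂)
    (h : CondIndepPair m μ A B) (h₁ : CondIndepPair m μ A₁ B) : CondIndepPair m μ A₂ B := by
  subst hA
  filter_upwards [h, h₁, condExp_indicator_union_ae_eq (m := m) hA₁ hA₂ hd,
    condExp_indicator_union_inter_ae_eq (m := m) hA₁ hA₂ hB hd] with ω e e₁ eA eAB
  simp only [Pi.mul_apply, Pi.add_apply] at *
  linear_combination e - eAB - e₁ + μ[B.indicator 1|m] ω * eA

theorem CondIndepPair.of_union_right [IsFiniteMeasure μ] {A B B₁ B₂ : Set Ω}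
    (hA : MeasurableSet A) (hB₁ : MeasurableSet B₁) (hB₂ : MeasurableSet B₂)
    (hd : Disjoint B₁ B₂) (hB : B = B₁ ∪ B₂)
    (h : CondIndepPair m μ A B) (h₁ : CondIndepPair m μ A B₁) : CondIndepPair m μ A B₂ :=
  (h.symm.of_union_left hB₁ hB₂ hA hd hB h₁.symm).symm

theorem eq_mul_of_cross_mul_eq {a b c d p q p₁ q₁ : ℝ}
    (ha : 0 ≤ a) (hb : 0 ≤ b) (hc : 0 ≤ c) (hd : 0 ≤ d) (hp₁ : 0 ≤ p₁) (hq₁ : 0 ≤ q₁)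
    (hp₁p : p₁ ≤ p) (hq₁q : q₁ ≤ q) (hcross : a * d = b * c) (hsum : a + b + c + d = p * q)
    (hrow : a + b = p₁ * q) (hcol : a + c = p * q₁) : a = p₁ * q₁ := by
  rcases eq_or_ne (p * q) 0 with hpq | hpq
  · have ha0 : a = 0 := by linarith
    rcases mul_eq_zero.1 hpq with rfl | rfl
    · rw [ha0, le_antisymm hp₁p hp₁, zero_mul]
    · rw [ha0, le_antisymm hq₁q hq₁, mul_zero]
  · refine mul_right_cancel₀ hpq ?_
    calc a * (p * q) = (a + b) * (a + c) := by rw [← hsum]; linear_combination hcross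
      _ = p₁ * q₁ * (p * q) := by rw [hrow, hcol]; ring

theorem CondIndepPair.of_crossRatioEq [IsFiniteMeasure μ] {A A₁ A₂ B B₁ B₂ : Set Ω}
    (hA₁ : MeasurableSet A₁) (hA₂ : MeasurableSet A₂)
    (hB₁ : MeasurableSet B₁) (hB₂ : MeasurableSet B₂)
    (hdA : Disjoint A₁ A₂) (hdB : Disjoint B₁ B₂) (hA : A = A₁ ∪ A₂) (hB : B = B₁ ∪ B₂)
    (hAB : CondIndepPair m μ A B) (hA₁B : CondIndepPair m μ A₁ B)
    (hAB₁ : CondIndepPair m μ A B₁) (hcross : CrossRatioEq m μ A₁ A₂ B₁ B₂) :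
    CondIndepPair m μ A₁ B₁ := by
  subst hA hB
  have hsum := condExp_indicator_union_inter_ae_eq (m := m) (μ := μ) hA₁ hA₂ (hB₁.union hB₂) hdA
  have hrow₁ := condExp_indicator_inter_union_ae_eq (m := m) (μ := μ) hA₁ hB₁ hB₂ hdB
  have hrow₂ := condExp_indicator_inter_union_ae_eq (m := m) (μ := μ) hA₂ hB₁ hB₂ hdB
  have hcol := condExp_indicator_union_inter_ae_eq (m := m) (μ := μ) hA₁ hA₂ hB₁ hdA
  have hp := condExp_indicator_mono (m := m) (μ := μ) hA₁ (hA₁.union hA₂) subset_union_left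
  have hq := condExp_indicator_mono (m := m) (μ := μ) hB₁ (hB₁.union hB₂) subset_union_left
  filter_upwards [hAB, hA₁B, hAB₁, hcross, hsum, hrow₁, hrow₂, hcol, hp, hq,
    condExp_indicator_nonneg (m := m) (μ := μ) (A₁ ∩ B₁),
    condExp_indicator_nonneg (m := m) (μ := μ) (A₁ ∩ B₂),
    condExp_indicator_nonneg (m := m) (μ := μ) (A₂ ∩ B₁),
    condExp_indicator_nonneg (m := m) (μ := μ) (A₂ ∩ B₂),
    condExp_indicator_nonneg (m := m) (μ := μ) A₁, condExp_indicator_nonneg (m := m) (μ := μ) B₁]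
    with ω eAB eA₁B eAB₁ ecross esum erow₁ erow₂ ecol ep eq na nb nc nd np₁ nq₁
  simp only [Pi.mul_apply, Pi.add_apply, Pi.zero_apply] at *
  exact eq_mul_of_cross_mul_eq na nb nc nd np₁ nq₁ ep eq ecross (by linarith) (by linarith)
    (by linarith)

theorem CondIndepPair.children_of_crossRatioEq [IsFiniteMeasure μ] {A A₁ A₂ B B₁ B₂ : Set Ω}
    (hA₁ : MeasurableSet A₁) (hA₂ : MeasurableSet A₂)
    (hB₁ : MeasurableSet B₁) (hB₂ : MeasurableSet B₂)
    (hdA : Disjoint A₁ A₂) (hdB : Disjoint B₁ B₂) (hA : A = A₁ ∪ A₂) (hB : B = B₁ ∪ B₂)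
    (hAB : CondIndepPair m μ A B) (hA₁B : CondIndepPair m μ A₁ B)
    (hAB₁ : CondIndepPair m μ A B₁) (hcross : CrossRatioEq m μ A₁ A₂ B₁ B₂) :
    CondIndepPair m μ A₁ B₁ ∧ CondIndepPair m μ A₁ B₂ ∧
      CondIndepPair m μ A₂ B₁ ∧ CondIndepPair m μ A₂ B₂ := by
  have h₁₁ := hAB.of_crossRatioEq hA₁ hA₂ hB₁ hB₂ hdA hdB hA hB hA₁B hAB₁ hcross
  have h₂₁ := hAB₁.of_union_left hA₁ hA₂ hB₁ hdA hA h₁₁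
  have h₂B := hAB.of_union_left hA₁ hA₂ (hB ▸ hB₁.union hB₂) hdA hA hA₁B
  exact ⟨h₁₁, hA₁B.of_union_right hA₁ hB₁ hB₂ hdB hB h₁₁, h₂₁,
    h₂B.of_union_right hA₂ hB₁ hB₂ hdB hB h₂₁⟩

end CondIndepPair

structure IsDyadicSplitting {Ω : Type*} [MeasurableSpace Ω] (A : ℕ → ℕ → Set Ω) : Prop where
  measurableSet : ∀ l j, MeasurableSet (A l j)
  root : A 0 0 = univ
  split : ∀ l j, A l j = A (l + 1) (2 * j) ∪ A (l + 1) (2 * j + 1)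
  disjoint : ∀ l j, Disjoint (A (l + 1) (2 * j)) (A (l + 1) (2 * j + 1))

theorem IsDyadicSplitting.condIndepPair_of_crossRatioEq {Ω : Type*} {m m0 : MeasurableSpace Ω}
    {μ : Measure Ω} [IsFiniteMeasure μ] (hm : m ≤ m0)
    {A B : ℕ → ℕ → Set Ω} (hA : IsDyadicSplitting A) (hB : IsDyadicSplitting B) {k1 k2 : ℕ}
    (hcross : ∀ l1 < k1, ∀ l2 < k2, ∀ j1 < 2 ^ l1, ∀ j2 < 2 ^ l2,
      CrossRatioEq m μ (A (l1 + 1) (2 * j1)) (A (l1 + 1) (2 * j1 + 1))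
        (B (l2 + 1) (2 * j2)) (B (l2 + 1) (2 * j2 + 1))) :
    ∀ l1 ≤ k1, ∀ l2 ≤ k2, ∀ j1 < 2 ^ l1, ∀ j2 < 2 ^ l2, CondIndepPair m μ (A l1 j1) (B l2 j2) := by
  intro l1
  induction l1 with
  | zero =>
    intro _ l2 _ j1 hj1 j2 _
    obtain rfl : j1 = 0 := by simpa using hj1
    rw [hA.root]
    exact condIndepPair_univ_left hm _
  | succ l1 ih1 =>
    intro hl1 l2
    induction l2 with
    | zero =>
      intro _ j1 _ j2 hj2
      obtain rfl : j2 = 0 := by simpa using hj2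
      rw [hB.root]
      exact condIndepPair_univ_right hm _
    | succ l2 ih2 =>
      intro hl2 j1 hj1 j2 hj2
      obtain ⟨p1, hp1⟩ := Nat.even_or_odd' j1
      obtain ⟨p2, hp2⟩ := Nat.even_or_odd' j2
      have hp1lt : p1 < 2 ^ l1 := by rw [pow_succ] at hj1; omega
      have hp2lt : p2 < 2 ^ l2 := by rw [pow_succ] at hj2; omega
      obtain ⟨h₁₁, h₁₂, h₂₁, h₂₂⟩ := CondIndepPair.children_of_crossRatioEq
        (hA.measurableSet _ _) (hA.measurableSet _ _) (hB.measurableSet _ _)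
        (hB.measurableSet _ _) (hA.disjoint l1 p1) (hB.disjoint l2 p2) (hA.split l1 p1)
        (hB.split l2 p2) (ih1 (by omega) l2 (by omega) p1 hp1lt p2 hp2lt)
        (ih2 (by omega) (2 * p1) (by rw [pow_succ]; omega) p2 hp2lt)
        (ih1 (by omega) (l2 + 1) hl2 p1 hp1lt (2 * p2) (by rw [pow_succ]; omega))
        (hcross l1 (by omega) l2 (by omega) p1 hp1lt p2 hp2lt)
      rcases hp1 with rfl | rfl <;> rcases hp2 with rfl | rfl
      exacts [h₁₁, h₁₂, h₂₁, h₂₂]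

theorem dyad_eq_union (l j : ℕ) : dyad l j = dyad (l + 1) (2 * j) ∪ dyad (l + 1) (2 * j + 1) := by
  have h : (0 : ℝ) < 2 ^ l := by positivity
  simp only [dyad, pow_succ]
  push_cast
  rw [Ioc_union_Ioc_eq_Ioc (by gcongr; linarith) (by gcongr; linarith)]
  congr 1 <;> field_simp; ring

theorem disjoint_dyad (l j : ℕ) : Disjoint (dyad (l + 1) (2 * j)) (dyad (l + 1) (2 * j + 1)) := by
  refine Ioc_disjoint_Ioc_of_le (le_of_eq ?_)
  push_cast
  rfl

theorem isDyadicSplitting_preimage_dyad {Ω : Type*} [MeasurableSpace Ω] {X : Ω → ℝ}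
    (hX : Measurable X) (hX01 : ∀ ω, X ω ∈ Ioc (0 : ℝ) 1) :
    IsDyadicSplitting fun l j => X ⁻¹' dyad l j where
  measurableSet _ _ := hX measurableSet_Ioc
  root := eq_univ_of_forall fun ω => by simpa [dyad] using hX01 ω
  split l j := by rw [dyad_eq_union, preimage_union]
  disjoint l j := (disjoint_dyad l j).preimage X

theorem indicator_one_comp_mul_indicator_one_comp {Ω α β : Type*} (X : Ω → α) (Y : Ω → β)
    (S : Set α) (T : Set β) :
    (fun ω => S.indicator (fun _ => (1 : ℝ)) (X ω) * T.indicator (fun _ => 1) (Y ω))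
      = (X ⁻¹' S ∩ Y ⁻¹' T).indicator 1 := by
  rw [inter_indicator_one]
  rfl

theorem dyadic_condIndep_iff_windows_odds_ratio_general
    {Ω : Type*} [MeasurableSpace Ω]
    (μ : Measure Ω) [IsProbabilityMeasure μ]
    (d : ℕ) (X Y : Ω → ℝ) (Z : Ω → EuclideanSpace ℝ (Fin d))
    (hX : Measurable X) (hY : Measurable Y) (hZ : Measurable Z)
    (hX01 : ∀ ω, X ω ∈ Set.Ioc (0 : ℝ) 1) (hY01 : ∀ ω, Y ω ∈ Set.Ioc (0 : ℝ) 1)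
    (k1 k2 : ℕ) (hk1 : 1 ≤ k1) (hk2 : 1 ≤ k2) :
    kCondIndep μ X Y Z k1 k2 ↔
      ∀ l1 ≤ k1 - 1, ∀ j1 < 2 ^ l1, ∀ l2 ≤ k2 - 1, ∀ j2 < 2 ^ l2,
        (μ[fun ω => (dyad (l1 + 1) (2 * j1)).indicator (fun _ => (1 : ℝ)) (X ω) *
              (dyad (l2 + 1) (2 * j2)).indicator (fun _ => (1 : ℝ)) (Y ω) |
            MeasurableSpace.comap Z inferInstance] *
          μ[fun ω => (dyad (l1 + 1) (2 * j1 + 1)).indicator (fun _ => (1 : ℝ)) (X ω) *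
              (dyad (l2 + 1) (2 * j2 + 1)).indicator (fun _ => (1 : ℝ)) (Y ω) |
            MeasurableSpace.comap Z inferInstance])
        =ᵐ[μ]
        (μ[fun ω => (dyad (l1 + 1) (2 * j1)).indicator (fun _ => (1 : ℝ)) (X ω) *
              (dyad (l2 + 1) (2 * j2 + 1)).indicator (fun _ => (1 : ℝ)) (Y ω) |
            MeasurableSpace.comap Z inferInstance] *
          μ[fun ω => (dyad (l1 + 1) (2 * j1 + 1)).indicator (fun _ => (1 : ℝ)) (X ω) *
              (dyad (l2 + 1) (2 * j2)).indicator (fun _ => (1 : ℝ)) (Y ω) |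
            MeasurableSpace.comap Z inferInstance]) := by
  simp only [kCondIndep, indicator_one_comp_mul_indicator_one_comp]
  constructor
  · intro h l1 hl1 j1 hj1 l2 hl2 j2 hj2
    have hc1 : 2 * j1 + 1 < 2 ^ (l1 + 1) := by rw [pow_succ]; omega
    have hc2 : 2 * j2 + 1 < 2 ^ (l2 + 1) := by rw [pow_succ]; omega
    have h' := h (l1 + 1) (by omega) (l2 + 1) (by omega)
    exact CrossRatioEq.of_condIndepPair (h' (2 * j1) (by omega) (2 * j2) (by omega))
      (h' (2 * j1) (by omega) _ hc2) (h' _ hc1 (2 * j2) (by omega)) (h' _ hc1 _ hc2)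
  · intro h
    exact (isDyadicSplitting_preimage_dyad hX hX01).condIndepPair_of_crossRatioEq hZ.comap_le
      (isDyadicSplitting_preimage_dyad hY hY01)
      fun l1 hl1 l2 hl2 j1 hj1 j2 hj2 => h l1 (by omega) j1 hj1 l2 (by omega) j2 hj2

/-- for `k1, k2 ≥ 1`, `X ⊥_{k1,k2} Y | Z` holds iff for every window `I × J` with
`I ∈ 𝓘_{k1−1}` and `J ∈ 𝓙_{k2−1}`, the conditional cross-product identity
`μ[1_{X∈I^l}1_{Y∈J^l}|σ(Z)]·μ[1_{X∈I^r}1_{Y∈J^r}|σ(Z)]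
  = μ[1_{X∈I^l}1_{Y∈J^r}|σ(Z)]·μ[1_{X∈I^r}1_{Y∈J^l}|σ(Z)]` holds a.e.
(vanishing of the conditional log odds ratio of the window). -/
theorem dyadic_condIndep_iff_windows_odds_ratio
    {Ω : Type*} [MeasurableSpace Ω] [StandardBorelSpace Ω]
    (μ : Measure Ω) [IsProbabilityMeasure μ]
    (d : ℕ) (X Y : Ω → ℝ) (Z : Ω → EuclideanSpace ℝ (Fin d))
    (hX : Measurable X) (hY : Measurable Y) (hZ : Measurable Z)
    (hX01 : ∀ ω, X ω ∈ Set.Ioc (0 : ℝ) 1) (hY01 : ∀ ω, Y ω ∈ Set.Ioc (0 : ℝ) 1)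
    (k1 k2 : ℕ) (hk1 : 1 ≤ k1) (hk2 : 1 ≤ k2) :
    kCondIndep μ X Y Z k1 k2 ↔
      ∀ l1 ≤ k1 - 1, ∀ j1 < 2 ^ l1, ∀ l2 ≤ k2 - 1, ∀ j2 < 2 ^ l2,
        (μ[fun ω => (dyad (l1 + 1) (2 * j1)).indicator (fun _ => (1 : ℝ)) (X ω) *
              (dyad (l2 + 1) (2 * j2)).indicator (fun _ => (1 : ℝ)) (Y ω) |
            MeasurableSpace.comap Z inferInstance] *
          μ[fun ω => (dyad (l1 + 1) (2 * j1 + 1)).indicator (fun _ => (1 : ℝ)) (X ω) *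
              (dyad (l2 + 1) (2 * j2 + 1)).indicator (fun _ => (1 : ℝ)) (Y ω) |
            MeasurableSpace.comap Z inferInstance])
        =ᵐ[μ]
        (μ[fun ω => (dyad (l1 + 1) (2 * j1)).indicator (fun _ => (1 : ℝ)) (X ω) *
              (dyad (l2 + 1) (2 * j2 + 1)).indicator (fun _ => (1 : ℝ)) (Y ω) |
            MeasurableSpace.comap Z inferInstance] *
          μ[fun ω => (dyad (l1 + 1) (2 * j1 + 1)).indicator (fun _ => (1 : ℝ)) (X ω) *
              (dyad (l2 + 1) (2 * j2)).indicator (fun _ => (1 : ℝ)) (Y ω) |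
            MeasurableSpace.comap Z inferInstance]) :=
  dyadic_condIndep_iff_windows_odds_ratio_general μ d X Y Z hX hY hZ hX01 hY01 k1 k2 hk1 hk2
end

section
/- Let ν be a probability measure on ℝ^d, p_min ∈ (0,1), L > 0, and let p : ℝ^d → [0,1]^{{0,1}×{0,1}} be a continuous map with Σ_{x,y} p(x,y|z) = 1 and min_{x,y} p(x,y|z) > p_min for all z, and such that |p_X(0|z) − p_X(0|z')| ∨ |p_Y(0|z) − p_Y(0|z')| ≤ L·‖z − z'‖ for all z, z', where p_X(0|z) = p(0,0|z) + p(0,1|z) and p_Y(0|z) = p(0,0|z) + p(1,0|z). Then there exist constants C > 0 and h₀ ∈ (0, p_min/L], depending only on L and p_min, with the following property: for every measurable S ⊆ ℝ^d with ν(S) > 0 whose closure is compact and connected and whose diameter h = sup_{z,z'∈S} ‖z − z'‖ satisfies h ≤ h₀, and for every z* in the closure of S with (1/ν(S))·∫_S p(0,0|z) dν(z) = p(0,0|z*), it holds that |θ_S − θ(z*)| ≤ C·h, where p̄(x,y) = (1/ν(S))·∫_S p(x,y|z) dν(z), θ_S = log[p̄(0,0)·p̄(1,1)/(p̄(0,1)·p̄(1,0))]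 is the marginal log odds ratio of the stratum S, and θ(z*) = log[p(0,0|z*)·p(1,1|z*)/(p(0,1|z*)·p(1,0|z*))] is the conditional log odds ratio at z*. -/
/-!
Averaging over the stratum turns `p(·|z)` into the cell probabilities `p̄` of the conditional
distribution `ν[|S]`. Averaging commutes with taking margins, so the Lipschitz bound on the
margins gives `|p̄_X(0) − p_X(0|z*)| ≤ L h` and `|p̄_Y(0) − p_Y(0|z*)| ≤ L h`. Since `z*` matches
the `(0,0)` cell exactly, this controls the `(0,1)` and `(1,0)` cells, and then the `(1,1)` cell
because both tables sum to one. All cells are at least `p_min`, where `log` is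
`1/p_min`-Lipschitz, so `|θ_S − θ(z*)| ≤ 4 L h / p_min`.
-/

open MeasureTheory ProbabilityTheory Real

noncomputable def logOddsRatio (q : Fin 2 → Fin 2 → ℝ) : ℝ :=
  log (q 0 0 * q 1 1 / (q 0 1 * q 1 0))

theorem logOddsRatio_eq {q : Fin 2 → Fin 2 → ℝ} (hq : ∀ x y, 0 < q x y) :
    logOddsRatio q = log (q 0 0) + log (q 1 1) - log (q 0 1) - log (q 1 0) := by
  have := hq 0 0; have := hq 0 1; have := hq 1 0; have := hq 1 1
  rw [logOddsRatio, log_div (by positivity) (by positivity), log_mul (by positivity)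
    (by positivity), log_mul (by positivity) (by positivity)]
  ring

theorem abs_log_sub_log_le_div {m u v : ℝ} (hm : 0 < m) (hu : m ≤ u) (hv : m ≤ v) :
    |log u - log v| ≤ |u - v| / m := by
  have key : ∀ {u v : ℝ}, m ≤ u → m ≤ v → log u - log v ≤ |u - v| / m := by
    intro u v hu hv
    have hu0 : 0 < u := hm.trans_le hu
    have hv0 : 0 < v := hm.trans_le hv
    calc log u - log v = log (u / v) := (log_div hu0.ne' hv0.ne').symm
      _ ≤ u / v - 1 := log_le_sub_one_of_pos (by positivity)
      _ = (u - v) / v := by field_simp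
      _ ≤ |u - v| / v := by gcongr; exact le_abs_self _
      _ ≤ |u - v| / m := by gcongr
  rw [abs_sub_le_iff]
  exact ⟨key hu hv, abs_sub_comm u v ▸ key hv hu⟩

theorem abs_logOddsRatio_sub_le {q r : Fin 2 → Fin 2 → ℝ} {m δ : ℝ} (hm : 0 < m)
    (hq : ∀ x y, m ≤ q x y) (hr : ∀ x y, m ≤ r x y)
    (hsum : ∑ x, ∑ y, q x y = ∑ x, ∑ y, r x y) (h00 : q 0 0 = r 0 0)
    (hX : |(q 0 0 + q 0 1) - (r 0 0 + r 0 1)| ≤ δ)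
    (hY : |(q 0 0 + q 1 0) - (r 0 0 + r 1 0)| ≤ δ) :
    |logOddsRatio q - logOddsRatio r| ≤ 4 * δ / m := by
  have h01 : |q 0 1 - r 0 1| ≤ δ := by rwa [h00, add_sub_add_left_eq_sub] at hX
  have h10 : |q 1 0 - r 1 0| ≤ δ := by rwa [h00, add_sub_add_left_eq_sub] at hY
  have h11 : |q 1 1 - r 1 1| ≤ 2 * δ := by
    simp only [Fin.sum_univ_two] at hsum
    have : q 1 1 - r 1 1 = -(q 0 1 - r 0 1) - (q 1 0 - r 1 0) := by linarith
    rw [this]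
    linarith [abs_sub (-(q 0 1 - r 0 1)) (q 1 0 - r 1 0), abs_neg (q 0 1 - r 0 1)]
  have l01 := (abs_log_sub_log_le_div hm (hq 0 1) (hr 0 1)).trans (by gcongr : _ ≤ δ / m)
  have l10 := (abs_log_sub_log_le_div hm (hq 1 0) (hr 1 0)).trans (by gcongr : _ ≤ δ / m)
  have l11 := (abs_log_sub_log_le_div hm (hq 1 1) (hr 1 1)).trans (by gcongr : _ ≤ 2 * δ / m)
  rw [logOddsRatio_eq fun x y => hm.trans_le (hq x y),
    logOddsRatio_eq fun x y => hm.trans_le (hr x y), h00]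
  have hsplit : 4 * δ / m = 2 * δ / m + δ / m + δ / m := by ring
  rw [abs_le] at l01 l10 l11 ⊢
  constructor <;> linarith [l01.1, l01.2, l10.1, l10.2, l11.1, l11.2]

section Averages

variable {α : Type*} [MeasurableSpace α]

theorem inv_toReal_mul_setIntegral_eq_integral_cond (μ : Measure α) (s : Set α) (f : α → ℝ) :
    (μ s).toReal⁻¹ * ∫ z in s, f z ∂μ = ∫ z, f z ∂μ[|s] := by
  rw [ProbabilityTheory.cond, integral_smul_measure, ENNReal.toReal_inv, smul_eq_mul]

variable {ρ : Measure α} [IsProbabilityMeasure ρ] {f : α → ℝ}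

theorem le_integral_of_ae_le {c : ℝ} (hf : Integrable f ρ) (hc : ∀ᵐ z ∂ρ, c ≤ f z) :
    c ≤ ∫ z, f z ∂ρ :=
  (convex_Ici c).integral_mem isClosed_Ici hc hf

theorem abs_integral_sub_le_of_ae {c B : ℝ} (hf : Integrable f ρ)
    (hB : ∀ᵐ z ∂ρ, |f z - c| ≤ B) : |∫ z, f z ∂ρ - c| ≤ B := by
  have := (convex_closedBall c B).integral_mem Metric.isClosed_closedBall
    (by simpa only [Metric.mem_closedBall, Real.dist_eq] using hB) hf
  rwa [Metric.mem_closedBall, Real.dist_eq] at this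

theorem sum_sum_integral_eq_one {ι κ : Type*} [Fintype ι] [Fintype κ] {p : α → ι → κ → ℝ}
    (hp : ∀ x y, Integrable (fun z => p z x y) ρ) (hsum : ∀ z, ∑ x, ∑ y, p z x y = 1) :
    ∑ x, ∑ y, ∫ z, p z x y ∂ρ = 1 :=
  calc ∑ x, ∑ y, ∫ z, p z x y ∂ρ = ∫ z, ∑ x, ∑ y, p z x y ∂ρ := by
        rw [integral_finsetSum _ fun x _ => integrable_finsetSum _ fun y _ => hp x y]
        exact Finset.sum_congr rfl fun x _ => (integral_finsetSum _ fun y _ => hp x y).symm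
    _ = 1 := by simp only [hsum, integral_const, probReal_univ, one_smul]

end Averages

theorem abs_integral_cond_sub_le_mul_diam {E : Type*} [PseudoMetricSpace E] [MeasurableSpace E]
    {μ : Measure E} [IsFiniteMeasure μ] {s : Set E} (hs : MeasurableSet s) (hμs : μ s ≠ 0)
    (hbdd : Bornology.IsBounded s) {f : E → ℝ} (hf : Integrable f μ[|s]) {L : ℝ} (hL : 0 ≤ L)
    {z₀ : E} (hz₀ : z₀ ∈ closure s) (hlip : ∀ z, |f z - f z₀| ≤ L * dist z z₀) :
    |∫ z, f z ∂μ[|s] - f z₀| ≤ L * Metric.diam s := by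
  have := cond_isProbabilityMeasure (μ := μ) hμs
  refine abs_integral_sub_le_of_ae hf ?_
  filter_upwards [ae_cond_mem hs] with z hz
  refine (hlip z).trans (mul_le_mul_of_nonneg_left ?_ hL)
  rw [← Metric.diam_closure]
  exact Metric.dist_le_diam_of_mem hbdd.closure (subset_closure hz) hz₀



/-- quantitative comparison of the marginal log odds ratio `θ_S` of a small
stratum `S` with the conditional log odds ratio `θ(z*)` at a mean-value point `z*`:
there are constants `C > 0` and `h₀ ∈ (0, p_min/L]` depending only on `L` and `p_min` such that
for every admissible `ν`, `p`, every small stratum `S` (of diameter `h ≤ h₀`, positive measure,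
compact connected closure), and every mean-value point `z*` for the `(0,0)` cell,
`|θ_S − θ(z*)| ≤ C · h`. -/
theorem marginal_vs_conditional_log_odds_ratio
    (d : ℕ) (L pmin : ℝ) (hL : 0 < L) (hpmin : pmin ∈ Set.Ioo (0 : ℝ) 1) :
    ∃ C > (0 : ℝ), ∃ h₀ ∈ Set.Ioc (0 : ℝ) (pmin / L),
      ∀ (ν : Measure (EuclideanSpace ℝ (Fin d))), IsProbabilityMeasure ν →
      ∀ p : EuclideanSpace ℝ (Fin d) → Fin 2 → Fin 2 → ℝ,
        (∀ x y, Continuous fun z => p z x y) →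
        (∀ z x y, p z x y ∈ Set.Icc (0 : ℝ) 1) →
        (∀ z, ∑ x, ∑ y, p z x y = 1) →
        (∀ z x y, pmin < p z x y) →
        (∀ z z',
          max |(p z 0 0 + p z 0 1) - (p z' 0 0 + p z' 0 1)|
              |(p z 0 0 + p z 1 0) - (p z' 0 0 + p z' 1 0)| ≤ L * dist z z') →
        ∀ S : Set (EuclideanSpace ℝ (Fin d)), MeasurableSet S → 0 < ν S →
          IsCompact (closure S) → IsConnected (closure S) →
          Metric.diam S ≤ h₀ →
          ∀ zstar ∈ closure S,
            (ν S).toReal⁻¹ * ∫ z in S, p z 0 0 ∂ν = p zstar 0 0 →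
            |Real.log
                (((ν S).toReal⁻¹ * ∫ z in S, p z 0 0 ∂ν) *
                    ((ν S).toReal⁻¹ * ∫ z in S, p z 1 1 ∂ν) /
                  (((ν S).toReal⁻¹ * ∫ z in S, p z 0 1 ∂ν) *
                    ((ν S).toReal⁻¹ * ∫ z in S, p z 1 0 ∂ν))) -
              Real.log (p zstar 0 0 * p zstar 1 1 / (p zstar 0 1 * p zstar 1 0))| ≤
            C * Metric.diam S := by
  obtain ⟨hpmin0, -⟩ := hpmin
  refine ⟨4 * L / pmin, by positivity, pmin / L, ⟨by positivity, le_rfl⟩, ?_⟩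
  intro ν _ p hcont hIcc hsum hlow hlip S hS hSpos hK _ _ zstar hzstar hmean
  have := cond_isProbabilityMeasure (μ := ν) hSpos.ne'
  have hint : ∀ x y, Integrable (fun z => p z x y) ν[|S] := fun x y =>
    .of_bound (hcont x y).aestronglyMeasurable 1 (.of_forall fun z =>
      Real.norm_eq_abs _ ▸ abs_le.2 ⟨by linarith [(hIcc z x y).1], (hIcc z x y).2⟩)
  have hmargin : ∀ x y x' y', (∀ z z', |(p z x y + p z x' y') - (p z' x y + p z' x' y')| ≤
      L * dist z z') → |(∫ z, p z x y ∂ν[|S] + ∫ z, p z x' y' ∂ν[|S]) -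
        (p zstar x y + p zstar x' y')| ≤ L * Metric.diam S := fun x y x' y' hlip' => by
    rw [← integral_add (hint x y) (hint x' y')]
    exact abs_integral_cond_sub_le_mul_diam hS hSpos.ne'
      (Metric.isBounded_closure_iff.1 hK.isBounded) ((hint x y).add (hint x' y')) hL.le
      hzstar fun z => hlip' z zstar
  have hlow_avg : ∀ x y, pmin ≤ ∫ z, p z x y ∂ν[|S] := fun x y =>
    le_integral_of_ae_le (hint x y) (.of_forall fun z => (hlow z x y).le)
  simp only [inv_toReal_mul_setIntegral_eq_integral_cond] at hmean ⊢
  calc _ ≤ 4 * (L * Metric.diam S) / pmin :=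
        abs_logOddsRatio_sub_le (q := fun x y => ∫ z, p z x y ∂ν[|S]) hpmin0 hlow_avg
          (fun x y => (hlow zstar x y).le)
          ((sum_sum_integral_eq_one hint hsum).trans (hsum zstar).symm) hmean
          (hmargin 0 0 0 1 fun z z' => (le_max_left _ _).trans (hlip z z'))
          (hmargin 0 0 1 0 fun z z' => (le_max_right _ _).trans (hlip z z'))
    _ = 4 * L / pmin * Metric.diam S := by ring
end

section
/- Let A', A, B be nonempty finite sets, φ : A' → A a function, p a pmf on A', and q a pmf on B. Let (U_1,V_1), …, (U_n,V_n) be i.i.d. pairs with U_i ∼ p and V_i ∼ q, U_i independent of V_i. Define the fine row counts R'(a') = #{i : U_i = a'} for a' ∈ A', the coarse row counts R(a) = #{i : φ(U_i) = a} for a ∈ A, the column counts C(b) = #{i : V_i = b} for b ∈ B, and the coarse table M(a,b) = #{i : φ(U_i) = a, V_i = b}. Then for every integer-valued array m on A×B and all margin values r', c with P(R' = r', C = c) > 0, P( M = m | R' = r', C = c ) = P( M = m | R = r, C = c ), where r(a) = Σ_{a' : φ(a') = a} r'(a'). In other words, conditionally on the column counts, the coarse contingency table depends on the row information only through the coarse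 row counts. -/
/-!
Write `E` for the event `R' = r', C = c`, `E'` for `R = r, C = c` and `F` for `M = m`. Since
`E ⊆ E'`, the claim is the cross identity `P(E ∩ F) P(E') = P(E) P(E' ∩ F)`, an equality between
the probabilities of two product events for a pair `(ω, ω')` of independent samples. When `ω` and
`ω'` have the same coarse row counts, a permutation `σ` matches their coarse row labels, and
exchanging the fine row labels of `ω` and `ω'` along `σ`, keeping all column labels, fixes the
coarse view of each sample, swaps their fine row counts and preserves the product weight
`∏ p(u_i) q(v_i)`. This exchange is an involution carrying `(E ∩ F) × E'` onto `(E' ∩ F) × E`.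
-/

open MeasureTheory ProbabilityTheory Set
open scoped ENNReal

theorem MeasureTheory.measure_eq_of_bijOn {Ω Ω' : Type*} [MeasurableSpace Ω]
    [MeasurableSingletonClass Ω] [MeasurableSpace Ω'] [MeasurableSingletonClass Ω']
    {μ : Measure Ω} {μ' : Measure Ω'} {s : Set Ω} {t : Set Ω'} (hs : s.Finite) {f : Ω → Ω'}
    (hf : BijOn f s t) (hμ : ∀ x ∈ s, μ' {f x} = μ {x}) : μ' t = μ s := by
  have ht : t.Finite := hf.image_eq ▸ hs.image f
  rw [← hs.coe_toFinset, ← ht.coe_toFinset, ← sum_measure_singleton, ← sum_measure_singleton]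
  exact Finset.sum_nbij f (fun x hx => by simpa using hf.mapsTo (by simpa using hx))
    (by simpa using hf.injOn) (by simpa using hf.surjOn)
    (fun x hx => (hμ x (by simpa using hx)).symm) |>.symm

theorem ProbabilityTheory.cond_eq_cond_of_mul_eq {Ω : Type*} [MeasurableSpace Ω]
    {μ : Measure Ω} [IsFiniteMeasure μ] {E₁ E₂ F : Set Ω} (hE₁ : MeasurableSet E₁)
    (hE₂ : MeasurableSet E₂) (h₁ : μ E₁ ≠ 0) (h₂ : μ E₂ ≠ 0)
    (h : μ (E₁ ∩ F) * μ E₂ = μ E₁ * μ (E₂ ∩ F)) : μ[F | E₁] = μ[F | E₂] := by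
  rw [cond_apply hE₁, cond_apply hE₂, ← ENNReal.div_eq_inv_mul, ← ENNReal.div_eq_inv_mul,
    ENNReal.div_eq_div_iff h₂ (measure_ne_top μ E₂) h₁ (measure_ne_top μ E₁), mul_comm, h]

theorem Set.ncard_setOf_comp_eq_sum {ι α β : Type*} [Fintype ι] [Fintype α] [DecidableEq β]
    (φ : α → β) (x : ι → α) (b : β) :
    {i | φ (x i) = b}.ncard = ∑ u with φ u = b, {i | x i = u}.ncard := by
  classical
  simp only [ncard_eq_toFinset_card', toFinset_ofPred]
  rw [Finset.card_eq_sum_card_fiberwise (f := x) (t := {u | φ u = b})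
    (fun i hi => by simpa using hi)]
  refine Finset.sum_congr rfl fun u hu => congrArg Finset.card ?_
  ext i
  simp only [Finset.mem_filter, Finset.mem_univ, true_and] at hu ⊢
  exact ⟨And.right, fun h => ⟨h ▸ hu, h⟩⟩

theorem Set.ncard_setOf_comp_perm {ι : Type*} (σ : Equiv.Perm ι) (p : ι → Prop) :
    {i | p (σ i)}.ncard = {i | p i}.ncard :=
  ncard_preimage_of_injective_subset_range σ.injective
    (by rw [Equiv.range_eq_univ]; exact subset_univ _)

theorem Equiv.Perm.exists_comp_eq_of_ncard_fiber_eq {ι β : Type*} [Finite ι] {x y : ι → β}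
    (h : ∀ b, {i | x i = b}.ncard = {i | y i = b}.ncard) : ∃ σ : Equiv.Perm ι, x ∘ σ = y := by
  have e : ∀ b, {i // y i = b} ≃ {i // x i = b} := fun b =>
    (Finite.card_eq.1 ((Nat.card_coe_set_eq _).trans
      ((h b).symm.trans (Nat.card_coe_set_eq _).symm))).some
  exact ⟨Equiv.ofFiberEquiv e, funext (Equiv.ofFiberEquiv_map e)⟩

section CoarseExchange

variable {ι α β γ : Type*}

open Classical in
noncomputable def matchingPerm (x y : ι → β) : Equiv.Perm ι :=
  if h : ∃ σ : Equiv.Perm ι, x ∘ σ = y then h.choose else 1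

theorem comp_matchingPerm [Finite ι] {x y : ι → β}
    (h : ∀ b, {i | x i = b}.ncard = {i | y i = b}.ncard) : x ∘ matchingPerm x y = y := by
  have hσ := Equiv.Perm.exists_comp_eq_of_ncard_fiber_eq h
  rw [matchingPerm, dif_pos hσ]
  exact hσ.choose_spec

def rowCountsEq (r : α → ℕ) : Set (ι → α × γ) := {ω | ∀ u, {i | (ω i).1 = u}.ncard = r u}

def coarseView (φ : α → β) (ω : ι → α × γ) : ι → β × γ := fun i => (φ (ω i).1, (ω i).2)

def SameRowCounts (s s' : ι → β × γ) : Prop :=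
  ∀ b, {i | (s i).1 = b}.ncard = {i | (s' i).1 = b}.ncard

theorem coarseView_mem_rowCountsEq [Fintype ι] [Fintype α] [DecidableEq β] (φ : α → β)
    {r : α → ℕ} {ω : ι → α × γ} (hω : ω ∈ rowCountsEq r) :
    coarseView φ ω ∈ rowCountsEq fun b => ∑ u with φ u = b, r u := fun b =>
  (ncard_setOf_comp_eq_sum φ (fun i => (ω i).1) b).trans (Finset.sum_congr rfl fun u _ => hω u)

def exchangeRows (σ : Equiv.Perm ι) (z : (ι → α × γ) × (ι → α × γ)) :
    (ι → α × γ) × (ι → α × γ) :=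
  (fun i => ((z.2 (σ.symm i)).1, (z.1 i).2), fun i => ((z.1 (σ i)).1, (z.2 i).2))

theorem exchangeRows_involutive (σ : Equiv.Perm ι) :
    Function.Involutive (exchangeRows (α := α) (γ := γ) σ) := fun z => by
  ext i <;> simp [exchangeRows]

theorem exchangeRows_fst_mem_rowCountsEq_iff {σ : Equiv.Perm ι} {z : (ι → α × γ) × (ι → α × γ)}
    {r : α → ℕ} : (exchangeRows σ z).1 ∈ rowCountsEq r ↔ z.2 ∈ rowCountsEq r :=
  forall_congr' fun u => by
    rw [exchangeRows, ← ncard_setOf_comp_perm σ.symm fun j => (z.2 j).1 = u]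

theorem exchangeRows_snd_mem_rowCountsEq_iff {σ : Equiv.Perm ι} {z : (ι → α × γ) × (ι → α × γ)}
    {r : α → ℕ} : (exchangeRows σ z).2 ∈ rowCountsEq r ↔ z.1 ∈ rowCountsEq r :=
  forall_congr' fun u => by
    rw [exchangeRows, ← ncard_setOf_comp_perm σ fun j => (z.1 j).1 = u]

theorem coarseView_exchangeRows {φ : α → β} {σ : Equiv.Perm ι} {z : (ι → α × γ) × (ι → α × γ)}
    (hσ : (fun i => φ (z.1 i).1) ∘ σ = fun i => φ (z.2 i).1) :
    coarseView φ (exchangeRows σ z).1 = coarseView φ z.1 ∧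
      coarseView φ (exchangeRows σ z).2 = coarseView φ z.2 := by
  constructor <;> funext i
  · simpa [coarseView, exchangeRows] using (congrFun hσ (σ.symm i)).symm
  · simpa [coarseView, exchangeRows] using congrFun hσ i

theorem prod_mul_prod_exchangeRows [Fintype ι] {M : Type*} [CommMonoid M] (f : α → M)
    (g : γ → M) (σ : Equiv.Perm ι) (z : (ι → α × γ) × (ι → α × γ)) :
    (∏ i, f ((exchangeRows σ z).1 i).1 * g ((exchangeRows σ z).1 i).2) *
        ∏ i, f ((exchangeRows σ z).2 i).1 * g ((exchangeRows σ z).2 i).2 =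
      (∏ i, f (z.1 i).1 * g (z.1 i).2) * ∏ i, f (z.2 i).1 * g (z.2 i).2 := by
  simp only [exchangeRows, Finset.prod_mul_distrib]
  rw [Equiv.prod_comp σ.symm fun j => f (z.2 j).1, Equiv.prod_comp σ fun j => f (z.1 j).1]
  ac_rfl

noncomputable def coarseExchange (φ : α → β) (z : (ι → α × γ) × (ι → α × γ)) :
    (ι → α × γ) × (ι → α × γ) :=
  exchangeRows (matchingPerm (Prod.fst ∘ coarseView φ z.1) (Prod.fst ∘ coarseView φ z.2)) z

variable [Finite ι] {φ : α → β} {z : (ι → α × γ) × (ι → α × γ)}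

theorem coarseView_coarseExchange (hz : SameRowCounts (coarseView φ z.1) (coarseView φ z.2)) :
    coarseView φ (coarseExchange φ z).1 = coarseView φ z.1 ∧
      coarseView φ (coarseExchange φ z).2 = coarseView φ z.2 :=
  coarseView_exchangeRows (comp_matchingPerm hz)

theorem coarseExchange_coarseExchange
    (hz : SameRowCounts (coarseView φ z.1) (coarseView φ z.2)) :
    coarseExchange φ (coarseExchange φ z) = z := by
  obtain ⟨h₁, h₂⟩ := coarseView_coarseExchange hz
  rw [coarseExchange, h₁, h₂]
  exact exchangeRows_involutive _ z

theorem bijOn_coarseExchange (r : α → ℕ) {S₁ S₂ : Set (ι → β × γ)}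
    (hS : ∀ s₁ ∈ S₁, ∀ s₂ ∈ S₂, SameRowCounts s₁ s₂) :
    BijOn (coarseExchange φ) ((rowCountsEq r ∩ coarseView φ ⁻¹' S₁) ×ˢ (coarseView φ ⁻¹' S₂))
      ((coarseView φ ⁻¹' S₁) ×ˢ (rowCountsEq r ∩ coarseView φ ⁻¹' S₂)) := by
  refine InvOn.bijOn (f' := coarseExchange φ) ⟨?_, ?_⟩ ?_ ?_
  · rintro z ⟨⟨-, h₁⟩, h₂⟩
    exact coarseExchange_coarseExchange (hS _ h₁ _ h₂)
  · rintro z ⟨h₁, -, h₂⟩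
    exact coarseExchange_coarseExchange (hS _ h₁ _ h₂)
  · rintro z ⟨⟨hr, h₁⟩, h₂⟩
    obtain ⟨e₁, e₂⟩ := coarseView_coarseExchange (hS _ h₁ _ h₂)
    exact ⟨mem_preimage.2 (e₁ ▸ h₁), exchangeRows_snd_mem_rowCountsEq_iff.2 hr,
      mem_preimage.2 (e₂ ▸ h₂)⟩
  · rintro z ⟨h₁, hr, h₂⟩
    obtain ⟨e₁, e₂⟩ := coarseView_coarseExchange (hS _ h₁ _ h₂)
    exact ⟨⟨exchangeRows_fst_mem_rowCountsEq_iff.2 hr, mem_preimage.2 (e₁ ▸ h₁)⟩,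
      mem_preimage.2 (e₂ ▸ h₂)⟩

end CoarseExchange

section IIDSample

variable {ι α β γ : Type*} [Fintype ι] [MeasurableSpace α] [MeasurableSpace γ]
  {P : Measure (α × γ)} [IsProbabilityMeasure P] {f : α → ℝ≥0∞} {g : γ → ℝ≥0∞}

local notation "ν" => Measure.pi fun _ : ι => P

theorem measure_pi_singleton_eq_prod (hP : ∀ u v, P {(u, v)} = f u * g v)
    (ω : ι → α × γ) : ν {ω} = ∏ i, f (ω i).1 * g (ω i).2 := by
  rw [Measure.pi_singleton]
  exact Finset.prod_congr rfl fun i _ => hP _ _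

variable [Finite α] [Finite γ] [MeasurableSingletonClass α] [MeasurableSingletonClass γ]

theorem measure_rowCountsEq_inter_mul_comm (hP : ∀ u v, P {(u, v)} = f u * g v) (φ : α → β)
    (r : α → ℕ) {S₁ S₂ : Set (ι → β × γ)} (hS : ∀ s₁ ∈ S₁, ∀ s₂ ∈ S₂, SameRowCounts s₁ s₂) :
    ν (rowCountsEq r ∩ coarseView φ ⁻¹' S₁) * ν (coarseView φ ⁻¹' S₂) =
      ν (rowCountsEq r ∩ coarseView φ ⁻¹' S₂) * ν (coarseView φ ⁻¹' S₁) := by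
  rw [mul_comm (ν (rowCountsEq r ∩ coarseView φ ⁻¹' S₂)), ← Measure.prod_prod,
    ← Measure.prod_prod]
  refine (measure_eq_of_bijOn (toFinite _) (bijOn_coarseExchange r hS) fun z _ => ?_).symm
  rw [← singleton_prod_singleton, Measure.prod_prod, ← singleton_prod_singleton,
    Measure.prod_prod]
  simp only [measure_pi_singleton_eq_prod hP]
  exact prod_mul_prod_exchangeRows f g _ z

theorem cond_rowCountsEq_inter_eq_cond_coarseRowCounts [Fintype α] [DecidableEq β]
    (hP : ∀ u v, P {(u, v)} = f u * g v) (φ : α → β) (r : α → ℕ) (S T : Set (ι → β × γ))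
    (hpos : ν (rowCountsEq r ∩ coarseView φ ⁻¹' S) ≠ 0) :
    ν[coarseView φ ⁻¹' T | rowCountsEq r ∩ coarseView φ ⁻¹' S] =
      ν[coarseView φ ⁻¹' T |
        coarseView φ ⁻¹' (rowCountsEq (fun b => ∑ u with φ u = b, r u) ∩ S)] := by
  set S' := rowCountsEq (fun b => ∑ u with φ u = b, r u) ∩ S
  have hE : rowCountsEq r ∩ coarseView φ ⁻¹' S = rowCountsEq r ∩ coarseView φ ⁻¹' S' := by
    ext ω
    exact ⟨fun h => ⟨h.1, coarseView_mem_rowCountsEq φ h.1, h.2⟩, fun h => ⟨h.1, h.2.2⟩⟩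
  rw [hE] at hpos ⊢
  refine cond_eq_cond_of_mul_eq (toFinite _).measurableSet (toFinite _).measurableSet hpos
    (fun h => hpos (measure_mono_null inter_subset_right h)) ?_
  rw [inter_assoc, ← preimage_inter]
  exact measure_rowCountsEq_inter_mul_comm hP φ r fun s₁ h₁ s₂ h₂ b =>
    (h₁.1.1 b).trans (h₂.1 b).symm

end IIDSample

theorem coarse_table_conditional_margin_sufficiency_general
    {A' A B : Type*} [Fintype A'] [Fintype B]
    [DecidableEq A]
    [MeasurableSpace A'] [MeasurableSingletonClass A']
    [MeasurableSpace B] [MeasurableSingletonClass B]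
    (φ : A' → A) (p : A' → ℝ) (q : B → ℝ)
    (hp0 : ∀ u, 0 ≤ p u)
    (P : Measure (A' × B)) [IsProbabilityMeasure P]
    (hP : ∀ u v, P {(u, v)} = ENNReal.ofReal (p u * q v))
    (n : ℕ) (m : A → B → ℕ) (r' : A' → ℕ) (c : B → ℕ)
    (hpos : (Measure.pi fun _ : Fin n => P)
      {ω | (∀ u, {i : Fin n | (ω i).1 = u}.ncard = r' u) ∧
           ∀ v, {i : Fin n | (ω i).2 = v}.ncard = c v} ≠ 0) :
    ProbabilityTheory.cond (Measure.pi fun _ : Fin n => P)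
        {ω | (∀ u, {i : Fin n | (ω i).1 = u}.ncard = r' u) ∧
             ∀ v, {i : Fin n | (ω i).2 = v}.ncard = c v}
        {ω | ∀ x y, {i : Fin n | φ (ω i).1 = x ∧ (ω i).2 = y}.ncard = m x y} =
      ProbabilityTheory.cond (Measure.pi fun _ : Fin n => P)
        {ω | (∀ x, {i : Fin n | φ (ω i).1 = x}.ncard = ∑ u ∈ Finset.univ.filter (fun u => φ u = x), r' u) ∧
             ∀ v, {i : Fin n | (ω i).2 = v}.ncard = c v}
        {ω | ∀ x y, {i : Fin n | φ (ω i).1 = x ∧ (ω i).2 = y}.ncard = m x y} :=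
  -- Up to unfolding, the three events are `rowCountsEq r' ∩ coarseView φ ⁻¹' S`,
  -- `coarseView φ ⁻¹' (rowCountsEq r ∩ S)` with `r` the coarsening of `r'`, and
  -- `coarseView φ ⁻¹' T`, for the `S` and `T` below.
  cond_rowCountsEq_inter_eq_cond_coarseRowCounts
    (fun u v => by rw [hP, ENNReal.ofReal_mul (hp0 u)]) φ r'
    {s | ∀ v, {i | (s i).2 = v}.ncard = c v}
    {s | ∀ x y, {i | (s i).1 = x ∧ (s i).2 = y}.ncard = m x y} hpos

/-- for i.i.d. pairs `(U_i, V_i)` with `U_i ∼ p` on `A'`, `V_i ∼ q` on `B`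
independent, and a coarsening map `φ : A' → A`, conditionally on the column counts the coarse
contingency table `M(a,b) = #{i : φ(U_i) = a, V_i = b}` depends on the row information only
through the coarse row counts: `P(M = m | R' = r', C = c) = P(M = m | R = r, C = c)`, where
`r(a) = Σ_{a' : φ(a') = a} r'(a')`. -/
theorem coarse_table_conditional_margin_sufficiency
    {A' A B : Type*} [Fintype A'] [Fintype A] [Fintype B]
    [Nonempty A'] [Nonempty A] [Nonempty B] [DecidableEq A]
    [MeasurableSpace A'] [MeasurableSingletonClass A']
    [MeasurableSpace B] [MeasurableSingletonClass B]
    (φ : A' → A) (p : A' → ℝ) (q : B → ℝ)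
    (hp0 : ∀ u, 0 ≤ p u) (hq0 : ∀ v, 0 ≤ q v)
    (hp1 : ∑ u, p u = 1) (hq1 : ∑ v, q v = 1)
    (P : Measure (A' × B)) [IsProbabilityMeasure P]
    (hP : ∀ u v, P {(u, v)} = ENNReal.ofReal (p u * q v))
    (n : ℕ) (m : A → B → ℕ) (r' : A' → ℕ) (c : B → ℕ)
    (hpos : (Measure.pi fun _ : Fin n => P)
      {ω | (∀ u, {i : Fin n | (ω i).1 = u}.ncard = r' u) ∧
           ∀ v, {i : Fin n | (ω i).2 = v}.ncard = c v} ≠ 0) :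
    ProbabilityTheory.cond (Measure.pi fun _ : Fin n => P)
        {ω | (∀ u, {i : Fin n | (ω i).1 = u}.ncard = r' u) ∧
             ∀ v, {i : Fin n | (ω i).2 = v}.ncard = c v}
        {ω | ∀ x y, {i : Fin n | φ (ω i).1 = x ∧ (ω i).2 = y}.ncard = m x y} =
      ProbabilityTheory.cond (Measure.pi fun _ : Fin n => P)
        {ω | (∀ x, {i : Fin n | φ (ω i).1 = x}.ncard = ∑ u ∈ Finset.univ.filter (fun u => φ u = x), r' u) ∧
             ∀ v, {i : Fin n | (ω i).2 = v}.ncard = c v}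
        {ω | ∀ x y, {i : Fin n | φ (ω i).1 = x ∧ (ω i).2 = y}.ncard = m x y} :=
  coarse_table_conditional_margin_sufficiency_general φ p q hp0 P hP n m r' c hpos
end
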